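/- arXiv:2210.09768 — 3 statements merged into one kernel-verified Lean document; each statement's English description precedes it below -/
import Mathlib

section
/- Let $0 < m < N$ and let $\mu$ be a finite positive Borel measure on $\mathbb{R}^N$. If the Riesz potential $I_m\mu(x) = \int_{\mathbb{R}^N} |x-y|^{m-N}\, d\mu(y)$ belongs to $L^p(\mathbb{R}^N)$ for some $p$ with $1 < p \le N/(N-m)$, then $\mu = 0$. -/
/-!
If `μ ≠ 0`, some ball `B = closedBall 0 R` has positive mass. For `‖x‖ ≥ R` every `y ∈ B` satisfies
`‖x - y‖ ≤ 2‖x‖`, so `I_m μ x ≥ μ B (2‖x‖)^(m-N)` and `(I_m μ x)^p ≥ c ‖x‖^(-(N-m)p)` with `c > 0`.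
Since `(N - m) p ≤ N`, the radial function `‖x‖^(-(N-m)p)` is not integrable outside `B`
(polar coordinates), so `I_m μ ∉ L^p`.
-/

open MeasureTheory Metric ENNReal

theorem exists_pos_measure_closedBall_ne_zero {X : Type*} [PseudoMetricSpace X]
    [MeasurableSpace X] {μ : Measure X} (hμ : μ ≠ 0) (x : X) :
    ∃ R : ℝ, 0 < R ∧ μ (closedBall x R) ≠ 0 := by
  by_contra! h
  refine hμ (Measure.measure_univ_eq_zero.1 ?_)
  rw [← iUnion_ball_nat_succ x]
  exact measure_iUnion_null fun n =>
    measure_mono_null ball_subset_closedBall (h _ n.cast_add_one_pos)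

theorem measure_closedBall_mul_le_lintegral_rpow_norm_sub {E : Type*} [SeminormedAddCommGroup E]
    [MeasurableSpace E] [OpensMeasurableSpace E] (μ : Measure E) {α R : ℝ} (hα : α ≤ 0)
    {x : E} (hx : R ≤ ‖x‖) :
    μ (closedBall 0 R) * ENNReal.ofReal (2 * ‖x‖) ^ α ≤
      ∫⁻ y, ENNReal.ofReal ‖x - y‖ ^ α ∂μ := by
  calc μ (closedBall 0 R) * ENNReal.ofReal (2 * ‖x‖) ^ α
      = ∫⁻ _ in closedBall 0 R, ENNReal.ofReal (2 * ‖x‖) ^ α ∂μ := by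
        rw [setLIntegral_const, mul_comm]
    _ ≤ ∫⁻ y in closedBall 0 R, ENNReal.ofReal ‖x - y‖ ^ α ∂μ := by
        refine setLIntegral_mono' measurableSet_closedBall fun y hy => ?_
        have hxy : ‖x - y‖ ≤ 2 * ‖x‖ := by
          linarith [norm_sub_le x y, mem_closedBall_zero_iff.1 hy]
        have := ENNReal.inv_le_inv.2
          (ENNReal.rpow_le_rpow (ENNReal.ofReal_le_ofReal hxy) (neg_nonneg.2 hα))
        simpa only [← ENNReal.rpow_neg, neg_neg] using this
    _ ≤ ∫⁻ y, ENNReal.ofReal ‖x - y‖ ^ α ∂μ := setLIntegral_le_lintegral _ _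

theorem measure_closedBall_rpow_mul_le_lintegral_rpow_norm_sub_rpow {E : Type*}
    [SeminormedAddCommGroup E] [MeasurableSpace E] [OpensMeasurableSpace E] (μ : Measure E)
    {α p R : ℝ} (hα : α ≤ 0) (hp : 0 ≤ p) {x : E} (hx : R ≤ ‖x‖) :
    μ (closedBall 0 R) ^ p * 2 ^ (α * p) * ENNReal.ofReal ‖x‖ ^ (α * p) ≤
      (∫⁻ y, ENNReal.ofReal ‖x - y‖ ^ α ∂μ) ^ p := by
  calc μ (closedBall 0 R) ^ p * 2 ^ (α * p) * ENNReal.ofReal ‖x‖ ^ (α * p)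
      = (μ (closedBall 0 R) * ENNReal.ofReal (2 * ‖x‖) ^ α) ^ p := by
        rw [ENNReal.mul_rpow_of_nonneg _ _ hp, ← ENNReal.rpow_mul, ENNReal.ofReal_mul zero_le_two,
          ENNReal.ofReal_ofNat, ENNReal.mul_rpow_of_ne_top ofNat_ne_top ofReal_ne_top, mul_assoc]
    _ ≤ (∫⁻ y, ENNReal.ofReal ‖x - y‖ ^ α ∂μ) ^ p :=
        ENNReal.rpow_le_rpow (measure_closedBall_mul_le_lintegral_rpow_norm_sub μ hα hx) hp

theorem setLIntegral_rpow_neg_norm_eq_top {E : Type*} [NormedAddCommGroup E] [NormedSpace ℝ E]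
    [FiniteDimensional ℝ E] [MeasurableSpace E] [BorelSpace E] [Nontrivial E]
    (μ : Measure E) [μ.IsAddHaarMeasure] {R s : ℝ} (hR : 0 < R)
    (hs : s ≤ Module.finrank ℝ E) :
    ∫⁻ x in {x | R < ‖x‖}, ENNReal.ofReal ‖x‖ ^ (-s) ∂μ = ∞ := by
  set g : ℝ → ℝ := (Set.Ioi R).indicator fun t => t ^ (-s) with hg_def
  have hg_meas : Measurable g :=
    (measurable_id.pow_const _).indicator measurableSet_Ioi
  have hg_nonneg : 0 ≤ g := Set.indicator_nonneg fun t ht => Real.rpow_nonneg (hR.trans ht).le _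
  have hg_lintegral : ∫⁻ x, ENNReal.ofReal (g ‖x‖) ∂μ =
      ∫⁻ x in {x | R < ‖x‖}, ENNReal.ofReal ‖x‖ ^ (-s) ∂μ := by
    rw [← lintegral_indicator (measurableSet_lt measurable_const measurable_norm)]
    refine lintegral_congr fun x => ?_
    by_cases hx : R < ‖x‖
    · rw [Set.indicator_of_mem (show x ∈ {a : E | R < ‖a‖} from hx), hg_def,
        Set.indicator_of_mem (show ‖x‖ ∈ Set.Ioi R from hx),
        ENNReal.ofReal_rpow_of_pos (hR.trans hx)]
    · rw [Set.indicator_of_notMem (show x ∉ {a : E | R < ‖a‖} from hx), hg_def,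
        Set.indicator_of_notMem (show ‖x‖ ∉ Set.Ioi R from hx),
        ENNReal.ofReal_zero]
  by_contra hfin
  have hg : Integrable (fun x : E => g ‖x‖) μ :=
    (lintegral_ofReal_ne_top_iff_integrable (hg_meas.comp measurable_norm).aestronglyMeasurable
      (.of_forall fun x => hg_nonneg _)).1 (hg_lintegral ▸ hfin)
  have := ((integrable_fun_norm_addHaar μ).1 hg).mono_set (Set.Ioi_subset_Ioi hR.le)
  have : IntegrableOn (fun t : ℝ => t ^ ((Module.finrank ℝ E : ℝ) - 1 - s)) (Set.Ioi R) := by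
    refine this.congr_fun (fun t (ht : R < t) => ?_) measurableSet_Ioi
    have ht0 : 0 < t := hR.trans ht
    show t ^ (Module.finrank ℝ E - 1) • g t = _
    rw [smul_eq_mul, hg_def, Set.indicator_of_mem (show t ∈ Set.Ioi R from ht),
      ← Real.rpow_natCast, ← Real.rpow_add ht0, Nat.cast_sub Module.finrank_pos, Nat.cast_one,
      sub_eq_add_neg _ s]
  have := (integrableOn_Ioi_rpow_iff hR).1 this
  linarith

theorem stmt0_general (N : ℕ) (hN : 2 ≤ N) (m p : ℝ) (hmN : m < N)
    (hp1 : 1 < p) (hp2 : p ≤ (N : ℝ) / ((N : ℝ) - m))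
    (μ : Measure (EuclideanSpace ℝ (Fin N)))
    (h : ∫⁻ x, (∫⁻ y, (ENNReal.ofReal ‖x - y‖) ^ (m - (N : ℝ)) ∂μ) ^ p < ⊤) :
    μ = 0 := by
  have : Nontrivial (EuclideanSpace ℝ (Fin N)) :=
    Module.nontrivial_of_finrank_pos (R := ℝ) (by rw [finrank_euclideanSpace_fin]; omega)
  by_contra hμ
  obtain ⟨R, hR, hB⟩ := exists_pos_measure_closedBall_ne_zero hμ 0
  have hs : (N - m) * p ≤ Module.finrank ℝ (EuclideanSpace ℝ (Fin N)) := by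
    rw [finrank_euclideanSpace_fin, ← le_div_iff₀' (sub_pos.2 hmN)]
    exact hp2
  have hp : 0 ≤ p := by linarith
  set c := μ (closedBall 0 R) ^ p * 2 ^ ((m - N) * p)
  have hc : c ≠ 0 := by simp [c, ENNReal.rpow_eq_zero_iff, hB, hp]
  refine h.ne (eq_top_iff.2 ?_)
  calc ∞ = c * ∫⁻ x in {x | R < ‖x‖}, ENNReal.ofReal ‖x‖ ^ (-((N - m) * p)) := by
        rw [setLIntegral_rpow_neg_norm_eq_top volume hR hs, mul_top hc]
    _ = ∫⁻ x in {x | R < ‖x‖}, c * ENNReal.ofReal ‖x‖ ^ ((m - N) * p) := by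
        rw [← lintegral_const_mul _ (by fun_prop), neg_mul_eq_neg_mul, neg_sub]
    _ ≤ _ := setLIntegral_mono' (measurableSet_lt measurable_const measurable_norm)
        fun x hx =>
          measure_closedBall_rpow_mul_le_lintegral_rpow_norm_sub_rpow μ (by linarith) hp hx.le
    _ ≤ _ := setLIntegral_le_lintegral _ _

/-- If the Riesz potential `I_m μ` of a finite positive Borel measure `μ`
on `ℝ^N` is in `L^p` for some `1 < p ≤ N/(N-m)`, then `μ = 0`. -/
theorem stmt0 (N : ℕ) (hN : 2 ≤ N) (m p : ℝ) (hm0 : 0 < m) (hmN : m < N)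
    (hp1 : 1 < p) (hp2 : p ≤ (N : ℝ) / ((N : ℝ) - m))
    (μ : Measure (EuclideanSpace ℝ (Fin N))) [IsFiniteMeasure μ]
    (h : ∫⁻ x, (∫⁻ y, (ENNReal.ofReal ‖x - y‖) ^ (m - (N : ℝ)) ∂μ) ^ p < ⊤) :
    μ = 0 :=
  stmt0_general N hN m p hmN hp1 hp2 μ h
end

section
/- Let $0 < m < N$ and let $\mu$ be a positive Borel measure on $\mathbb{R}^N$. If the Riesz potential $I_m\mu$ satisfies the weak-$L^1$ bound $\sup_{\lambda>0} \lambda\, |\{x : I_m\mu(x) > \lambda\}| < \infty$, then $\mu = 0$. -/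
open MeasureTheory Metric ENNReal Filter Module

/-!
If `μ ≠ 0`, some ball `B(0, R)` carries mass `β > 0`. Since the kernel `|x - y|^(m - N)` is
decreasing in the distance, `I_m μ ≥ (r + R)^(m - N) β` on the ball `B(0, r)`, so the level set at
half that height has measure `≳ r^N`. The weak-`L¹` quantity is then `≳ (2r)^(m - N) r^N = 2^(m - N) r^m`,
which is unbounded as `r → ∞` because `m > 0`.
-/

theorem ENNReal.rpow_le_rpow_of_nonpos {x y : ℝ≥0∞} {s : ℝ} (hxy : x ≤ y) (hs : s ≤ 0) :
    y ^ s ≤ x ^ s := by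
  obtain ⟨t, rfl⟩ : ∃ t, s = -t := ⟨-s, (neg_neg s).symm⟩
  rw [ENNReal.rpow_neg, ENNReal.rpow_neg]
  exact ENNReal.inv_le_inv.2 (ENNReal.rpow_le_rpow hxy (neg_nonpos.1 hs))

theorem two_rpow_mul_rpow_le {m d r R : ℝ} (hmd : m ≤ d) (hR : 0 < R) (hRr : R ≤ r) :
    2 ^ (m - d) * r ^ m ≤ (r + R) ^ (m - d) * r ^ d := by
  have hr : 0 < r := hR.trans_le hRr
  calc 2 ^ (m - d) * r ^ m = (2 * r) ^ (m - d) * r ^ d := by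
        rw [Real.mul_rpow zero_le_two hr.le, mul_assoc, ← Real.rpow_add hr, sub_add_cancel]
    _ ≤ (r + R) ^ (m - d) * r ^ d := by
        refine mul_le_mul_of_nonneg_right ?_ (by positivity)
        exact Real.rpow_le_rpow_of_nonpos (by positivity) (by linarith) (by linarith)

section RieszPotential

variable {E : Type*} [NormedAddCommGroup E] [MeasurableSpace E]

theorem exists_ofReal_le_measure_ball_zero {μ : Measure E} (hμ : μ ≠ 0) :
    ∃ R β : ℝ, 0 < R ∧ 0 < β ∧ ENNReal.ofReal β ≤ μ (ball 0 R) := by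
  obtain ⟨n, hn⟩ : ∃ n : ℕ, μ (ball 0 n) ≠ 0 := by
    by_contra! hall
    exact hμ (Measure.measure_univ_eq_zero.1 (iUnion_ball_nat (0 : E) ▸ measure_iUnion_null hall))
  obtain ⟨β, -, hβ0, hβ⟩ := ENNReal.lt_iff_exists_real_btwn.1 (pos_iff_ne_zero.2 hn)
  refine ⟨n, β, ?_, ENNReal.ofReal_pos.1 hβ0, hβ.le⟩
  by_contra! hn0
  exact hn (by rw [ball_eq_empty.2 hn0, measure_empty])

variable [OpensMeasurableSpace E]

theorem ofReal_rpow_mul_measure_ball_le_lintegral (μ : Measure E) {s : ℝ} (hs : s ≤ 0)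
    {x : E} {r R : ℝ} (hx : ‖x‖ ≤ r) :
    ENNReal.ofReal (r + R) ^ s * μ (ball 0 R) ≤ ∫⁻ y, ENNReal.ofReal ‖x - y‖ ^ s ∂μ :=
  calc ENNReal.ofReal (r + R) ^ s * μ (ball 0 R)
      = ∫⁻ _ in ball 0 R, ENNReal.ofReal (r + R) ^ s ∂μ := (setLIntegral_const _ _).symm
    _ ≤ ∫⁻ y in ball 0 R, ENNReal.ofReal ‖x - y‖ ^ s ∂μ := by
        refine setLIntegral_mono' measurableSet_ball fun y hy => ?_
        refine ENNReal.rpow_le_rpow_of_nonpos (ENNReal.ofReal_le_ofReal ?_) hs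
        have hy : ‖y‖ < R := mem_ball_zero_iff.1 hy
        linarith [norm_sub_le x y]
    _ ≤ ∫⁻ y, ENNReal.ofReal ‖x - y‖ ^ s ∂μ := setLIntegral_le_lintegral _ _

variable [NormedSpace ℝ E]

noncomputable def rieszPotential (m : ℝ) (μ : Measure E) (x : E) : ℝ≥0∞ :=
  ∫⁻ y, ENNReal.ofReal ‖x - y‖ ^ (m - finrank ℝ E) ∂μ

theorem ofReal_rpow_mul_le_rieszPotential {m : ℝ} (hmd : m ≤ finrank ℝ E) {μ : Measure E}
    {R β r : ℝ} (hβμ : ENNReal.ofReal β ≤ μ (ball 0 R)) (hrR : 0 < r + R) {x : E}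
    (hx : ‖x‖ ≤ r) :
    ENNReal.ofReal ((r + R) ^ (m - finrank ℝ E) * β) ≤ rieszPotential m μ x :=
  calc ENNReal.ofReal ((r + R) ^ (m - finrank ℝ E) * β)
      = ENNReal.ofReal (r + R) ^ (m - finrank ℝ E) * ENNReal.ofReal β := by
        rw [ENNReal.ofReal_mul (by positivity), ENNReal.ofReal_rpow_of_pos hrR]
    _ ≤ ENNReal.ofReal (r + R) ^ (m - finrank ℝ E) * μ (ball 0 R) := by gcongr
    _ ≤ rieszPotential m μ x :=
        ofReal_rpow_mul_measure_ball_le_lintegral μ (by linarith) hx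

theorem eq_zero_of_weakL1_rieszPotential [FiniteDimensional ℝ E] [BorelSpace E]
    (ν : Measure E) [ν.IsAddHaarMeasure] {m : ℝ} (hm0 : 0 < m) (hmd : m ≤ finrank ℝ E)
    {μ : Measure E} (h : ∃ C : ℝ≥0∞, C ≠ ⊤ ∧ ∀ t : ℝ, 0 < t →
      ENNReal.ofReal t * ν {x | ENNReal.ofReal t < rieszPotential m μ x} ≤ C) :
    μ = 0 := by
  by_contra hμ
  obtain ⟨C, hC, hbound⟩ := h
  obtain ⟨R, β, hR, hβ, hβμ⟩ := exists_ofReal_le_measure_ball_zero hμ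
  set d : ℝ := (finrank ℝ E : ℝ)
  set V := (ν (ball 0 1)).toReal
  have hV : 0 < V := ENNReal.toReal_pos (measure_ball_pos ν 0 one_pos).ne' measure_ball_lt_top.ne
  have hbound_ball : ∀ r, R ≤ r → (r + R) ^ (m - d) * r ^ d * (β / 2 * V) ≤ C.toReal := by
    intro r hRr
    have hr : 0 < r := hR.trans_le hRr
    set a := (r + R) ^ (m - d) * β
    have ha : 0 < a := by positivity
    have hlevel : ball (0 : E) r ⊆ {x | ENNReal.ofReal (a / 2) < rieszPotential m μ x} :=
      fun x hx => ((ENNReal.ofReal_lt_ofReal_iff ha).2 (half_lt_self ha)).trans_le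
        (ofReal_rpow_mul_le_rieszPotential hmd hβμ (by linarith) (mem_ball_zero_iff.1 hx).le)
    have hvol : ν (ball 0 r) = ENNReal.ofReal (r ^ d * V) := by
      rw [Measure.addHaar_ball_of_pos ν 0 hr, ENNReal.ofReal_mul (by positivity),
        ENNReal.ofReal_toReal measure_ball_lt_top.ne, Real.rpow_natCast]
    rw [← ENNReal.ofReal_le_iff_le_toReal hC,
      show (r + R) ^ (m - d) * r ^ d * (β / 2 * V) = a / 2 * (r ^ d * V) by ring,
      ENNReal.ofReal_mul (by positivity), ← hvol]
    exact (mul_le_mul_right (measure_mono hlevel) _).trans (hbound _ (half_pos ha))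
  have hgrowth : Tendsto (fun r : ℝ => 2 ^ (m - d) * r ^ m * (β / 2 * V)) atTop atTop :=
    ((tendsto_rpow_atTop hm0).const_mul_atTop (by positivity)).atTop_mul_const (by positivity)
  obtain ⟨r, hr, hRr⟩ :=
    ((hgrowth.eventually_gt_atTop C.toReal).and (eventually_ge_atTop R)).exists
  have := mul_le_mul_of_nonneg_right (two_rpow_mul_rpow_le hmd hR hRr)
    (by positivity : 0 ≤ β / 2 * V)
  linarith [hbound_ball r hRr]

end RieszPotential

theorem stmt1_general (N : ℕ) (m : ℝ) (hm0 : 0 < m) (hmN : m < N)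
    (μ : Measure (EuclideanSpace ℝ (Fin N)))
    (h : ∃ C : ℝ≥0∞, C ≠ ⊤ ∧ ∀ t : ℝ, 0 < t →
      ENNReal.ofReal t *
        volume {x : EuclideanSpace ℝ (Fin N) |
          ENNReal.ofReal t < ∫⁻ y, (ENNReal.ofReal ‖x - y‖) ^ (m - (N : ℝ)) ∂μ} ≤ C) :
    μ = 0 :=
  eq_zero_of_weakL1_rieszPotential volume hm0 (by rw [finrank_euclideanSpace_fin]; exact hmN.le)
    (by simpa only [rieszPotential, finrank_euclideanSpace_fin] using h)

/-- If the Riesz potential `I_m μ` of a positive Borel measure `μ` on `ℝ^N`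
satisfies the weak-`L¹` bound, then `μ = 0`. -/
theorem stmt1 (N : ℕ) (hN : 2 ≤ N) (m : ℝ) (hm0 : 0 < m) (hmN : m < N)
    (μ : Measure (EuclideanSpace ℝ (Fin N)))
    (h : ∃ C : ℝ≥0∞, C ≠ ⊤ ∧ ∀ t : ℝ, 0 < t →
      ENNReal.ofReal t *
        volume {x : EuclideanSpace ℝ (Fin N) |
          ENNReal.ofReal t < ∫⁻ y, (ENNReal.ofReal ‖x - y‖) ^ (m - (N : ℝ)) ∂μ} ≤ C) :
    μ = 0 :=
  stmt1_general N m hm0 hmN μ h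
end

section
/- (Hardy-type inequality, necessity) Let $1 \le q < \infty$, $\nu$ a $\sigma$-finite positive measure on $\mathbb{R}^N$, and $\tilde u, \tilde v$ nonnegative measurable functions with $\tilde v > 0$ a.e. Suppose there is a constant $C_0$ such that for all nonnegative measurable $\tilde g$, $\big[\int_{\mathbb{R}^N} \big(\int_{B_{|x|/2}} \tilde g(y)\,dy\big)^q \tilde u(x)\,d\nu(x)\big]^{1/q} \le C_0 \int_{\mathbb{R}^N} \tilde g(x)\tilde v(x)\,dx$. Then $\sup_{R>0} \big(\int_{\{|x| \ge 2R\}} \tilde u(x)\,d\nu(x)\big)^{1/q} \cdot \operatorname{esssup}_{x \in B_R} \tilde v(x)^{-1} < \infty$. -/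
open MeasureTheory Metric ENNReal

/-! Test the inequality with `g = 𝟙_M`, where `M ⊆ B_R` is the set on which `v⁻¹ > t` for some
`t` below the essential supremum of `v⁻¹` on `B_R`; `M` has positive finite measure. For
`‖x‖ ≥ 2R` the ball `B_{‖x‖/2}` contains `M`, so the left side is at least
`|M| (∫_{‖x‖ ≥ 2R} u dν)^{1/q}`, while the right side is at most `C₀ t⁻¹ |M|`. Cancelling `|M|`
and letting `t` increase to the essential supremum bounds every term of the supremum by `C₀`. -/

lemma measure_setOf_lt_ne_zero_of_lt_essSup {α β : Type*} [MeasurableSpace α] {μ : Measure α}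
    [CompleteLinearOrder β] {f : α → β} {t : β} (ht : t < essSup f μ) :
    μ {x | t < f x} ≠ 0 := by
  intro h0
  refine ht.not_ge (essSup_le_of_ae_le t ?_)
  rw [Filter.EventuallyLE, ae_iff]
  simpa only [not_le] using h0

lemma lintegral_indicator_one_mul_le {α : Type*} [MeasurableSpace α] {μ : Measure α}
    {M : Set α} (hM : MeasurableSet M) {v : α → ℝ≥0∞} {c : ℝ≥0∞} (hv : ∀ x ∈ M, v x ≤ c) :
    ∫⁻ x, M.indicator 1 x * v x ∂μ ≤ c * μ M := by
  have hind : (fun x => M.indicator 1 x * v x) = M.indicator v := by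
    ext x
    by_cases hx : x ∈ M <;> simp [hx]
  calc ∫⁻ x, M.indicator 1 x * v x ∂μ = ∫⁻ x in M, v x ∂μ := by
        rw [hind, lintegral_indicator hM]
    _ ≤ ∫⁻ _ in M, c ∂μ := setLIntegral_mono' hM hv
    _ = c * μ M := setLIntegral_const M c

lemma mul_rpow_setLIntegral_le_rpow_lintegral {α : Type*} [MeasurableSpace α] {ν : Measure α}
    {S : Set α} (hS : MeasurableSet S) {F u : α → ℝ≥0∞} {c : ℝ≥0∞} {q : ℝ} (hq : 0 < q)
    (hF : ∀ x ∈ S, c ≤ F x) :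
    c * (∫⁻ x in S, u x ∂ν) ^ (1 / q) ≤ (∫⁻ x, F x ^ q * u x ∂ν) ^ (1 / q) := by
  have hint : c ^ q * ∫⁻ x in S, u x ∂ν ≤ ∫⁻ x, F x ^ q * u x ∂ν :=
    calc c ^ q * ∫⁻ x in S, u x ∂ν ≤ ∫⁻ x in S, c ^ q * u x ∂ν := lintegral_const_mul_le _ _
      _ ≤ ∫⁻ x in S, F x ^ q * u x ∂ν := setLIntegral_mono' hS fun x hx =>
          mul_le_mul_left (ENNReal.rpow_le_rpow (hF x hx) hq.le) _
      _ ≤ ∫⁻ x, F x ^ q * u x ∂ν := setLIntegral_le_lintegral S _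
  calc c * (∫⁻ x in S, u x ∂ν) ^ (1 / q) = (c ^ q * ∫⁻ x in S, u x ∂ν) ^ (1 / q) := by
        rw [ENNReal.mul_rpow_of_nonneg _ _ (by positivity), ← ENNReal.rpow_mul, mul_one_div,
          div_self hq.ne', ENNReal.rpow_one]
    _ ≤ _ := ENNReal.rpow_le_rpow hint (by positivity)

section HardyBallOperator

variable {E : Type*} [SeminormedAddCommGroup E] [MeasurableSpace E]

noncomputable def hardyBallOperator (μ : Measure E) (g : E → ℝ≥0∞) (x : E) : ℝ≥0∞ :=
  ∫⁻ y in ball 0 (‖x‖ / 2), g y ∂μ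

lemma hardyBallOperator_indicator_one {μ : Measure E} {M : Set E} (hM : MeasurableSet M)
    {R : ℝ} (hMR : M ⊆ ball 0 R) {x : E} (hx : 2 * R ≤ ‖x‖) :
    hardyBallOperator μ (M.indicator 1) x = μ M := by
  have hMx : M ⊆ ball 0 (‖x‖ / 2) := hMR.trans (ball_subset_ball (by linarith))
  rw [hardyBallOperator, lintegral_indicator_one hM, Measure.restrict_apply hM,
    Set.inter_eq_self_of_subset_left hMx]

lemma rpow_setLIntegral_mul_le_of_lt_essSup [OpensMeasurableSpace E] [ProperSpace E]
    {μ : Measure E} [IsFiniteMeasureOnCompacts μ] {ν : Measure E} {u v : E → ℝ≥0∞}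
    (hv : Measurable v) {q : ℝ} (hq : 0 < q) {C : ℝ≥0∞}
    (h : ∀ g : E → ℝ≥0∞, Measurable g →
      (∫⁻ x, hardyBallOperator μ g x ^ q * u x ∂ν) ^ (1 / q) ≤ C * ∫⁻ x, g x * v x ∂μ)
    {R : ℝ} {t : ℝ≥0∞} (ht : t < essSup (fun x => (v x)⁻¹) (μ.restrict (ball 0 R))) :
    (∫⁻ x in {x | 2 * R ≤ ‖x‖}, u x ∂ν) ^ (1 / q) * t ≤ C := by
  rcases eq_or_ne t 0 with rfl | ht0
  · simp
  set A := (∫⁻ x in {x | 2 * R ≤ ‖x‖}, u x ∂ν) ^ (1 / q)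
  set M := ball (0 : E) R ∩ {x | t < (v x)⁻¹}
  have hMmeas : MeasurableSet M :=
    measurableSet_ball.inter (measurableSet_lt measurable_const hv.inv)
  have hM0 : μ M ≠ 0 := by
    have := measure_setOf_lt_ne_zero_of_lt_essSup ht
    rwa [Measure.restrict_apply' measurableSet_ball, Set.inter_comm] at this
  have hMtop : μ M ≠ ⊤ := (measure_mono_top Set.inter_subset_left).mt measure_ball_lt_top.ne
  have hlower : μ M * A ≤ (∫⁻ x, hardyBallOperator μ (M.indicator 1) x ^ q * u x ∂ν) ^ (1 / q) :=
    mul_rpow_setLIntegral_le_rpow_lintegral (F := hardyBallOperator μ (M.indicator 1))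
      (isClosed_le continuous_const continuous_norm).measurableSet hq
      fun x hx => (hardyBallOperator_indicator_one hMmeas Set.inter_subset_left hx).ge
  have hupper : ∫⁻ x, M.indicator 1 x * v x ∂μ ≤ t⁻¹ * μ M :=
    lintegral_indicator_one_mul_le hMmeas fun x hx => (ENNReal.lt_inv_iff_lt_inv.mp hx.2).le
  have hA : A * μ M ≤ C * t⁻¹ * μ M :=
    calc A * μ M = μ M * A := mul_comm _ _
      _ ≤ C * (t⁻¹ * μ M) :=
        hlower.trans ((h _ (measurable_one.indicator hMmeas)).trans (mul_le_mul_right hupper C))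
      _ = C * t⁻¹ * μ M := (mul_assoc _ _ _).symm
  rw [← ENNReal.le_div_iff_mul_le (.inl ht0) (.inl ht.ne_top), div_eq_mul_inv]
  exact (ENNReal.mul_le_mul_iff_left hM0 hMtop).mp hA

end HardyBallOperator

theorem stmt6_general (N : ℕ) (q : ℝ) (hq : 1 ≤ q)
    (ν : Measure (EuclideanSpace ℝ (Fin N)))
    (u v : EuclideanSpace ℝ (Fin N) → ℝ≥0∞) (hv : Measurable v)
    (C₀ : ℝ≥0∞) (hC₀ : C₀ ≠ ⊤)
    (h : ∀ g : EuclideanSpace ℝ (Fin N) → ℝ≥0∞, Measurable g →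
      (∫⁻ x, (∫⁻ y in ball (0 : EuclideanSpace ℝ (Fin N)) (‖x‖ / 2), g y) ^ q * u x ∂ν)
          ^ (1 / q) ≤
        C₀ * ∫⁻ x, g x * v x) :
    (⨆ (R : ℝ) (_ : 0 < R),
      (∫⁻ x in {x : EuclideanSpace ℝ (Fin N) | 2 * R ≤ ‖x‖}, u x ∂ν) ^ (1 / q) *
        essSup (fun x => (v x)⁻¹)
          (volume.restrict (ball (0 : EuclideanSpace ℝ (Fin N)) R))) < ⊤ := by
  refine lt_of_le_of_lt (iSup₂_le fun R _ => ?_) hC₀.lt_top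
  exact ENNReal.mul_le_of_forall_lt fun a ha t ht => (mul_le_mul_left ha.le t).trans
    (rpow_setLIntegral_mul_le_of_lt_essSup hv (one_pos.trans_le hq) h ht)

/-- Hardy-type inequality, necessity. -/
theorem stmt6 (N : ℕ) (hN : 2 ≤ N) (q : ℝ) (hq : 1 ≤ q)
    (ν : Measure (EuclideanSpace ℝ (Fin N))) [SigmaFinite ν]
    (u v : EuclideanSpace ℝ (Fin N) → ℝ≥0∞) (hu : Measurable u) (hv : Measurable v)
    (hv0 : ∀ᵐ x : EuclideanSpace ℝ (Fin N), v x ≠ 0)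
    (C₀ : ℝ≥0∞) (hC₀ : C₀ ≠ ⊤)
    (h : ∀ g : EuclideanSpace ℝ (Fin N) → ℝ≥0∞, Measurable g →
      (∫⁻ x, (∫⁻ y in ball (0 : EuclideanSpace ℝ (Fin N)) (‖x‖ / 2), g y) ^ q * u x ∂ν)
          ^ (1 / q) ≤
        C₀ * ∫⁻ x, g x * v x) :
    (⨆ (R : ℝ) (_ : 0 < R),
      (∫⁻ x in {x : EuclideanSpace ℝ (Fin N) | 2 * R ≤ ‖x‖}, u x ∂ν) ^ (1 / q) *
        essSup (fun x => (v x)⁻¹)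
          (volume.restrict (ball (0 : EuclideanSpace ℝ (Fin N)) R))) < ⊤ :=
  stmt6_general N q hq ν u v hv C₀ hC₀ h
end
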